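/- arXiv:1811.12114 — 3 statements merged into one kernel-verified Lean document; each statement's English description precedes it below -/
import Mathlib

section
/- Let d > 0, δ ≥ 0, L ≥ 0 be real numbers and let t_1, …, t_n be start times of n observations each of duration d that fit in the interval [a, a+L] (i.e., a ≤ t_k and t_k + d ≤ a + L for all k) and satisfy the setup-time condition with setup time δ (i.e., for all k ≠ l, either t_l ≥ t_k + d + δ or t_k ≥ t_l + d + δ). Then n ≤ ⌊(L + δ)/(d + δ)⌋. Equivalently, n·(d + δ) ≤ L + δ. -/
lemma equal_duration_aux (d δ : ℝ) (hd : 0 < d) (hδ : 0 ≤ δ) :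
    ∀ (n : ℕ) (a L : ℝ) (t : Fin n → ℝ),
    (∀ k, a ≤ t k ∧ t k + d ≤ a + L) →
    (∀ k l, k ≠ l → t l ≥ t k + d + δ ∨ t k ≥ t l + d + δ) →
    1 ≤ n → (n : ℝ) * (d + δ) ≤ L + δ := by
  intro n
  induction n with
  | zero => intro a L t _ _ h; omega
  | succ m ih =>
    intro a L t hfit hsetup _
    -- pick minimal element
    obtain ⟨k0, hk0⟩ := Finite.exists_min t
    have hmin : ∀ j : Fin m, t (k0.succAbove j) ≥ t k0 + d + δ := by
      intro j
      rcases hsetup k0 (k0.succAbove j) (Fin.succAbove_ne k0 j).symm with h | h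
      · exact h
      · exfalso
        have := hk0 (k0.succAbove j)
        linarith
    rcases Nat.eq_zero_or_pos m with hm | hm
    · subst hm
      have := hfit k0
      push_cast
      linarith [(hfit k0).1, (hfit k0).2]
    · set a' := t k0 + d + δ with ha'
      set L' := (a + L) - a' with hL'
      have hfit' : ∀ j : Fin m, a' ≤ t (k0.succAbove j) ∧ t (k0.succAbove j) + d ≤ a' + L' := by
        intro j
        refine ⟨hmin j, ?_⟩
        have := (hfit (k0.succAbove j)).2
        simp [hL']
        linarith
      have hsetup' : ∀ j l : Fin m, j ≠ l →
          t (k0.succAbove l) ≥ t (k0.succAbove j) + d + δ ∨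
          t (k0.succAbove j) ≥ t (k0.succAbove l) + d + δ := by
        intro j l hjl
        exact hsetup _ _ (fun h => hjl (Fin.succAbove_right_injective h))
      have hIH := ih a' L' (fun j => t (k0.succAbove j)) hfit' hsetup' hm
      have h1 : a ≤ t k0 := (hfit k0).1
      have : L' + δ ≤ L - d := by simp [hL', ha']; linarith
      push_cast
      linarith

/-- Equal-duration capacity bound: if `n` observations of duration `d` fit in `[a, a+L]`
and satisfy the setup-time condition with setup time `δ`, then
`n ≤ ⌊(L + δ)/(d + δ)⌋`, equivalently `n·(d + δ) ≤ L + δ`. -/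
theorem equal_duration_capacity_bound
    (n : ℕ) (a d δ L : ℝ) (hd : 0 < d) (hδ : 0 ≤ δ) (hL : 0 ≤ L)
    (t : Fin n → ℝ)
    (hfit : ∀ k, a ≤ t k ∧ t k + d ≤ a + L)
    (hsetup : ∀ k l, k ≠ l → t l ≥ t k + d + δ ∨ t k ≥ t l + d + δ) :
    (n : ℤ) ≤ ⌊(L + δ) / (d + δ)⌋ ∧ (n : ℝ) * (d + δ) ≤ L + δ := by
  have hmul : (n : ℝ) * (d + δ) ≤ L + δ := by
    rcases Nat.eq_zero_or_pos n with h | h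
    · subst h; simp; linarith
    · exact equal_duration_aux d δ hd hδ n a L t hfit hsetup h
  refine ⟨?_, hmul⟩
  rw [Int.le_floor]
  rw [le_div_iff₀ (by linarith)]
  push_cast
  exact hmul
end

section
/- Let δ ≥ 0, L ≥ 0 and let (t_i, D_i), i ∈ S, be a nonempty finite family of observations with durations D_i > 0 that fits in an interval [a, a+L] and satisfies the setup-time condition with setup time δ. Then Σ_{i∈S} (D_i + δ) ≤ L + δ; equivalently, Σ_{i∈S} D_i + (|S| − 1)·δ ≤ L. -/
/-! Pad each observation with its setup time: observation `i` then occupies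
`[t i, t i + D i + δ)`, and the setup-time condition makes these padded intervals disjoint.
If `m` starts last, every other padded interval ends by `t m`, so by induction their total
length is at most `t m - a`; the padded interval of `m` adds `D m + δ` and ends by
`a + L + δ`. -/

open Finset

theorem sum_add_le_sub_of_pairwise_separated {ι α : Type*}
    [AddCommGroup α] [LinearOrder α] [IsOrderedAddMonoid α]
    {S : Finset ι} {t D : ι → α} {δ a b : α}
    (hpos : ∀ i ∈ S, 0 < D i + δ)
    (hsep : (S : Set ι).Pairwise fun i j => t i + D i + δ ≤ t j ∨ t j + D j + δ ≤ t i)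
    (hab : a ≤ b) (hfit : ∀ i ∈ S, a ≤ t i ∧ t i + D i + δ ≤ b) :
    ∑ i ∈ S, (D i + δ) ≤ b - a := by
  classical
  induction S using Finset.induction_on_max_value t generalizing b with
  | empty => simpa using hab
  | insert m s hm hmax ih =>
    rw [coe_insert, Set.pairwise_insert] at hsep
    have hm_fit := hfit m (mem_insert_self m s)
    have hbefore : ∀ i ∈ s, t i + D i + δ ≤ t m := by
      intro i hi
      refine (hsep.2 i hi (ne_of_mem_of_not_mem hi hm).symm).1.resolve_left fun hafter => ?_
      have hlast : t m + (D m + δ) ≤ t m + 0 := by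
        simpa only [add_zero, add_assoc] using hafter.trans (hmax i hi)
      exact (hpos m (mem_insert_self m s)).not_ge (le_of_add_le_add_left hlast)
    have hrest : ∑ i ∈ s, (D i + δ) ≤ t m - a :=
      ih (fun i hi => hpos i (mem_insert_of_mem hi)) hsep.1 hm_fit.1
        fun i hi => ⟨(hfit i (mem_insert_of_mem hi)).1, hbefore i hi⟩
    calc ∑ i ∈ insert m s, (D i + δ) = (D m + δ) + ∑ i ∈ s, (D i + δ) := sum_insert hm
      _ ≤ (D m + δ) + (t m - a) := by gcongr
      _ = (t m + D m + δ) - a := by abel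
      _ ≤ b - a := sub_le_sub_right hm_fit.2 a

theorem setup_time_total_duration_bound_general
    {ι : Type*} (S : Finset ι)
    (t D : ι → ℝ) (a δ L : ℝ) (hδ : 0 ≤ δ) (hL : 0 ≤ L)
    (hD : ∀ i ∈ S, 0 < D i)
    (hfit : ∀ i ∈ S, a ≤ t i ∧ t i + D i ≤ a + L)
    (hsetup : ∀ i ∈ S, ∀ j ∈ S, i ≠ j →
      t j ≥ t i + D i + δ ∨ t i ≥ t j + D j + δ) :
    (∑ i ∈ S, (D i + δ)) ≤ L + δ ∧
    (∑ i ∈ S, D i) + ((S.card : ℝ) - 1) * δ ≤ L := by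
  have hbound : ∑ i ∈ S, (D i + δ) ≤ (a + L + δ) - a :=
    sum_add_le_sub_of_pairwise_separated (fun i hi => add_pos_of_pos_of_nonneg (hD i hi) hδ)
      (fun i hi j hj hij => hsetup i hi j hj hij) (by linarith)
      fun i hi => ⟨(hfit i hi).1, by linarith [(hfit i hi).2]⟩
  have hsplit : ∑ i ∈ S, (D i + δ) = ∑ i ∈ S, D i + S.card * δ := by
    rw [sum_add_distrib, sum_const, nsmul_eq_mul]
  constructor <;> linarith

/-- Unequal-duration capacity bound: if a nonempty finite family of observations with
durations `D i > 0` fits in `[a, a+L]` and satisfies the setup-time condition with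
setup time `δ`, then `∑ (D i + δ) ≤ L + δ`, equivalently
`∑ D i + (|S| − 1)·δ ≤ L`. -/
theorem setup_time_total_duration_bound
    {ι : Type*} (S : Finset ι) (hS : S.Nonempty)
    (t D : ι → ℝ) (a δ L : ℝ) (hδ : 0 ≤ δ) (hL : 0 ≤ L)
    (hD : ∀ i ∈ S, 0 < D i)
    (hfit : ∀ i ∈ S, a ≤ t i ∧ t i + D i ≤ a + L)
    (hsetup : ∀ i ∈ S, ∀ j ∈ S, i ≠ j →
      t j ≥ t i + D i + δ ∨ t i ≥ t j + D j + δ) :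
    (∑ i ∈ S, (D i + δ)) ≤ L + δ ∧
    (∑ i ∈ S, D i) + ((S.card : ℝ) - 1) * δ ≤ L :=
  setup_time_total_duration_bound_general S t D a δ L hδ hL hD hfit hsetup
end

section
/- Let δ ≥ 0, L ≥ 0 and let D_1, …, D_n > 0 be the observation durations of n candidate missions. The maximum cardinality of a subset S ⊆ {1, …, n} for which there exist start times making the observations (t_i, D_i), i ∈ S, fit in an interval [a, a+L] and satisfy the setup-time condition with setup time δ equals the largest k ∈ {0, 1, …, n} such that the sum of the k smallest values among D_1, …, D_n plus (k − 1)·δ is at most L (with the convention that k = 0 always qualifies). In particular, iteratively scheduling missions in nondecreasing order of duration, back to back with gaps δ, attains this maximum. -/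
/-- Any feasible schedule of a nonempty set `S` in `[a, a+L]` forces
`∑ D + (|S|-1)δ ≤ L`. -/
lemma sched_sum_le (n : ℕ) (δ : ℝ) (hδ : 0 ≤ δ) (D : Fin n → ℝ) (hD : ∀ i, 0 < D i) :
    ∀ (S : Finset (Fin n)) (a L : ℝ) (t : Fin n → ℝ), S.Nonempty →
    (∀ i ∈ S, a ≤ t i ∧ t i + D i ≤ a + L) →
    (∀ i ∈ S, ∀ j ∈ S, i ≠ j → t j ≥ t i + D i + δ ∨ t i ≥ t j + D j + δ) →
    (∑ i ∈ S, D i) + ((S.card : ℝ) - 1) * δ ≤ L := by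
  intro S
  induction S using Finset.strongInduction with
  | _ S ih =>
    intro a L t hne hfit hsep
    obtain ⟨i₀, hi₀S, hmin⟩ := S.exists_min_image t hne
    set S' := S.erase i₀ with hS'
    by_cases hne' : S'.Nonempty
    · have hsub : S' ⊂ S := Finset.erase_ssubset hi₀S
      have key : ∀ j ∈ S', t j ≥ t i₀ + D i₀ + δ := by
        intro j hj
        have hjS := Finset.mem_of_mem_erase hj
        have hji : j ≠ i₀ := Finset.ne_of_mem_erase hj
        rcases hsep i₀ hi₀S j hjS (Ne.symm hji) with h | h
        · exact h
        · exfalso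
          have := hmin j hjS
          nlinarith [hD j]
      have hih := ih S' hsub (t i₀ + D i₀ + δ) (a + L - (t i₀ + D i₀ + δ)) t hne'
        (by
          intro j hj
          refine ⟨key j hj, ?_⟩
          have := (hfit j (Finset.mem_of_mem_erase hj)).2
          linarith)
        (by
          intro i hi j hj hij
          exact hsep i (Finset.mem_of_mem_erase hi) j (Finset.mem_of_mem_erase hj) hij)
      have hcard : S'.card = S.card - 1 := Finset.card_erase_of_mem hi₀S
      have hcpos : 1 ≤ S.card := Finset.card_pos.mpr hne
      have hsum : ∑ i ∈ S, D i = D i₀ + ∑ i ∈ S', D i :=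
        (Finset.add_sum_erase S D hi₀S).symm
      have hca : a ≤ t i₀ := (hfit i₀ hi₀S).1
      have hcast : (S'.card : ℝ) = (S.card : ℝ) - 1 := by
        rw [hcard]; push_cast [Nat.cast_sub hcpos]; ring
      rw [hsum]
      rw [hcast] at hih
      nlinarith
    · have : S = {i₀} := by
        apply Finset.eq_singleton_iff_unique_mem.mpr
        refine ⟨hi₀S, fun x hx => ?_⟩
        by_contra hne2
        exact hne' ⟨x, Finset.mem_erase.mpr ⟨hne2, hx⟩⟩
      subst this
      simp only [Finset.sum_singleton, Finset.card_singleton]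
      have := hfit i₀ (Finset.mem_singleton_self i₀)
      push_cast
      linarith [this.1, this.2]

/-- The greedy back-to-back construction: if `∑_{i∈S} D i + (|S|-1)δ ≤ L`, the set `S`
can be scheduled in `[a, a+L]`. -/
lemma sched_exists (n K : ℕ) (a δ L : ℝ) (hδ : 0 ≤ δ)
    (D : Fin n → ℝ) (hD : ∀ i, 0 < D i)
    (S : Finset (Fin n)) (hcard : S.card = K)
    (hsum : (∑ i ∈ S, D i) + ((K : ℝ) - 1) * δ ≤ L) :
    ∃ t : Fin n → ℝ,
      (∀ i ∈ S, a ≤ t i ∧ t i + D i ≤ a + L) ∧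
      (∀ i ∈ S, ∀ j ∈ S, i ≠ j → t j ≥ t i + D i + δ ∨ t i ≥ t j + D j + δ) := by
  classical
  set e := S.orderIsoOfFin hcard with he
  have htot : ∑ j : Fin K, D (e j) = ∑ i ∈ S, D i := by
    rw [← Finset.sum_coe_sort S D]
    exact Fintype.sum_equiv e.toEquiv _ _ (fun j => rfl)
  refine ⟨fun i => if h : i ∈ S then
      a + (∑ j ∈ Finset.Iio (e.symm ⟨i, h⟩), D (e j)) + ((e.symm ⟨i, h⟩ : ℕ) : ℝ) * δ
    else a, ?_, ?_⟩
  · intro i hi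
    simp only [dif_pos hi]
    set r := e.symm ⟨i, hi⟩ with hr
    have hnn : 0 ≤ ∑ j ∈ Finset.Iio r, D (e j) :=
      Finset.sum_nonneg fun j _ => (hD _).le
    have hrδ : 0 ≤ ((r : ℕ) : ℝ) * δ := by positivity
    constructor
    · linarith
    · have hDi : D ↑(e r) = D i := by rw [hr, OrderIso.apply_symm_apply]
      have h1 : ∑ j ∈ Finset.Iic r, D (e j) = ∑ j ∈ Finset.Iio r, D (e j) + D i := by
        rw [← Finset.Iio_insert, Finset.sum_insert (by simp), hDi]; ring
      have h2 : ∑ j ∈ Finset.Iic r, D (e j) ≤ ∑ j : Fin K, D (e j) :=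
        Finset.sum_le_sum_of_subset_of_nonneg (Finset.subset_univ _)
          (fun j _ _ => (hD _).le)
      have h3 : ((r : ℕ) : ℝ) + 1 ≤ (K : ℝ) := by exact_mod_cast r.isLt
      have h4 : ((r : ℕ) : ℝ) * δ ≤ ((K : ℝ) - 1) * δ :=
        mul_le_mul_of_nonneg_right (by linarith) hδ
      rw [htot] at h2
      linarith
  · have step : ∀ (r s : Fin K), r < s →
        a + (∑ j ∈ Finset.Iio r, D (e j)) + ((r : ℕ) : ℝ) * δ + D ↑(e r) + δ ≤
        a + (∑ j ∈ Finset.Iio s, D (e j)) + ((s : ℕ) : ℝ) * δ := by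
      intro r s hrs
      have h1 : ∑ j ∈ Finset.Iic r, D (e j) ≤ ∑ j ∈ Finset.Iio s, D (e j) :=
        Finset.sum_le_sum_of_subset_of_nonneg (fun j hj => Finset.mem_Iio.mpr (lt_of_le_of_lt (Finset.mem_Iic.mp hj) hrs))
          (fun j _ _ => (hD _).le)
      have h2 : ∑ j ∈ Finset.Iic r, D (e j) = ∑ j ∈ Finset.Iio r, D (e j) + D ↑(e r) := by
        rw [← Finset.Iio_insert, Finset.sum_insert (by simp)]; ring
      have h3 : ((r : ℕ) : ℝ) + 1 ≤ ((s : ℕ) : ℝ) := by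
        exact_mod_cast Nat.succ_le_of_lt hrs
      have h4 : (((r : ℕ) : ℝ) + 1) * δ ≤ ((s : ℕ) : ℝ) * δ :=
        mul_le_mul_of_nonneg_right h3 hδ
      nlinarith
    intro i hi j hj hij
    simp only [dif_pos hi, dif_pos hj]
    set r := e.symm ⟨i, hi⟩ with hr
    set s := e.symm ⟨j, hj⟩ with hs
    have hDi : D ↑(e r) = D i := by rw [hr, OrderIso.apply_symm_apply]
    have hDj : D ↑(e s) = D j := by rw [hs, OrderIso.apply_symm_apply]
    have hrs : r ≠ s := by
      intro h
      apply hij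
      have : (⟨i, hi⟩ : {x // x ∈ S}) = ⟨j, hj⟩ := by
        rw [← e.apply_symm_apply ⟨i, hi⟩, ← e.apply_symm_apply ⟨j, hj⟩, ← hr, ← hs, h]
      exact congrArg Subtype.val this
    rcases hrs.lt_or_gt with h | h
    · left
      have := step r s h
      rw [hDi] at this
      linarith
    · right
      have := step s r h
      rw [hDj] at this
      linarith

/-- Unequal-duration maximum assignment capacity: the maximum cardinality of a subset
`S` of the `n` candidate missions that can be scheduled in `[a, a+L]` respecting the
setup-time condition with setup time `δ` equals the largest `k ≤ n` such that the sum
of the `k` smallest durations plus `(k − 1)·δ` is at most `L`. -/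
theorem shortest_first_capacity
    (n : ℕ) (a δ L : ℝ) (hδ : 0 ≤ δ) (hL : 0 ≤ L)
    (D : Fin n → ℝ) (hD : ∀ i, 0 < D i) (K : ℕ)
    (hK : IsGreatest
      {k : ℕ | k ≤ n ∧ ∃ S : Finset (Fin n), S.card = k ∧
        (∀ T : Finset (Fin n), T.card = k → ∑ i ∈ S, D i ≤ ∑ i ∈ T, D i) ∧
        (∑ i ∈ S, D i) + ((k : ℝ) - 1) * δ ≤ L} K) :
    IsGreatest
      {m : ℕ | ∃ (S : Finset (Fin n)) (t : Fin n → ℝ), S.card = m ∧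
        (∀ i ∈ S, a ≤ t i ∧ t i + D i ≤ a + L) ∧
        (∀ i ∈ S, ∀ j ∈ S, i ≠ j →
          t j ≥ t i + D i + δ ∨ t i ≥ t j + D j + δ)} K := by
  classical
  obtain ⟨⟨hKn, S₀, hcard₀, hmin₀, hsum₀⟩, hub⟩ := hK
  constructor
  · obtain ⟨t, hfit, hsep⟩ := sched_exists n K a δ L hδ D hD S₀ hcard₀ hsum₀
    exact ⟨S₀, t, hcard₀, hfit, hsep⟩
  · rintro m ⟨S, t, hcard, hfit, hsep⟩
    rcases Nat.eq_zero_or_pos m with hm0 | hm0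
    · exact hm0 ▸ Nat.zero_le K
    · have hne : S.Nonempty := Finset.card_pos.mp (hcard ▸ hm0)
      have hbound := sched_sum_le n δ hδ D hD S a L t hne hfit hsep
      rw [hcard] at hbound
      set F := Finset.univ.filter (fun T : Finset (Fin n) => T.card = m) with hF
      have hSF : S ∈ F := by simp [hF, hcard]
      obtain ⟨S', hS'F, hS'min⟩ := F.exists_min_image (fun T => ∑ i ∈ T, D i) ⟨S, hSF⟩
      have hS'card : S'.card = m := by
        simpa [hF] using hS'F
      apply hub
      refine ⟨?_, S', hS'card, ?_, ?_⟩
      · calc m = S.card := hcard.symm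
          _ ≤ Fintype.card (Fin n) := S.card_le_univ
          _ = n := Fintype.card_fin n
      · intro T hT
        exact hS'min T (by simp [hF, hT])
      · have := hS'min S hSF
        linarith
end
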